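/- Let n ≥ 1, γ ∈ (0,1), q_max ∈ (0,1), d_max ∈ (0,1), and suppose for each t ∈ {1,…,n} that q_t ∈ (0,1) and d_t ∈ (0,1) with q_t ≤ q_max and d_t ≤ d_max. If d_max < 1/(1 + ((1/γ) - 1)·(q_max/(1-q_max))), then (Σ_{t=1}^n q_t·d_t) / (Σ_{t=1}^n (q_t·d_t + (1-q_t)(1-d_t))) < γ. -/

import Mathlib

/-! The per-layer ratio `q d / (q d + (1 - q)(1 - d))` is increasing in `q` and `d`, so it is
at most its value at `(qmax, dmax)`, and the bound on `dmax` is exactly the condition that this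
value is below `γ`. A ratio of sums whose termwise ratios are all below `γ` is below `γ` too. -/

open Finset

theorem Finset.sum_div_sum_lt_of_forall_lt_mul {ι : Type*} {s : Finset ι} {a b : ι → ℝ} {γ : ℝ}
    (hγ : 0 < γ) (hs : s.Nonempty) (ha : ∀ t ∈ s, 0 ≤ a t) (h : ∀ t ∈ s, a t < γ * b t) :
    (∑ t ∈ s, a t) / (∑ t ∈ s, b t) < γ := by
  have hb : 0 < ∑ t ∈ s, b t :=
    sum_pos (fun t ht => pos_of_mul_pos_right ((ha t ht).trans_lt (h t ht)) hγ.le) hs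
  rw [div_lt_iff₀ hb, mul_sum]
  exact sum_lt_sum_of_nonempty hs h

theorem one_sub_mul_mul_lt_of_lt_one_div {γ qmax dmax : ℝ} (hγ0 : 0 < γ) (hγ1 : γ ≤ 1)
    (hq0 : 0 ≤ qmax) (hq1 : qmax < 1)
    (h : dmax < 1 / (1 + ((1 / γ) - 1) * (qmax / (1 - qmax)))) :
    (1 - γ) * (qmax * dmax) < γ * ((1 - qmax) * (1 - dmax)) := by
  have h1q : 0 < 1 - qmax := sub_pos.2 hq1
  have hK : 0 ≤ ((1 / γ) - 1) * (qmax / (1 - qmax)) :=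
    mul_nonneg (sub_nonneg.2 (one_le_one_div hγ0 hγ1)) (div_nonneg hq0 h1q.le)
  rw [lt_div_iff₀ (by linarith)] at h
  have hscaled := mul_lt_mul_of_pos_left h (mul_pos hγ0 h1q)
  have hexpand : γ * (1 - qmax) * (dmax * (1 + ((1 / γ) - 1) * (qmax / (1 - qmax))))
      = dmax * (γ * (1 - qmax) + (1 - γ) * qmax) := by
    field_simp
  linarith

theorem one_sub_mul_mul_lt_of_le {γ q d qmax dmax : ℝ} (hγ0 : 0 ≤ γ) (hγ1 : γ ≤ 1)
    (hq0 : 0 ≤ q) (hd0 : 0 ≤ d) (hqle : q ≤ qmax) (hdle : d ≤ dmax)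
    (hqmax : qmax ≤ 1) (hdmax : dmax ≤ 1)
    (hmax : (1 - γ) * (qmax * dmax) < γ * ((1 - qmax) * (1 - dmax))) :
    (1 - γ) * (q * d) < γ * ((1 - q) * (1 - d)) := by
  have h1γ : 0 ≤ 1 - γ := sub_nonneg.2 hγ1
  have h1q : 0 ≤ 1 - qmax := sub_nonneg.2 hqmax
  have h1d : 0 ≤ 1 - dmax := sub_nonneg.2 hdmax
  calc (1 - γ) * (q * d) ≤ (1 - γ) * (qmax * dmax) := by gcongr; exact hq0.trans hqle
    _ < γ * ((1 - qmax) * (1 - dmax)) := hmax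
    _ ≤ γ * ((1 - q) * (1 - d)) := by gcongr; linarith

theorem stmt_10_general (n : ℕ) (hn : 1 ≤ n) (γ qmax dmax : ℝ)
    (hg0 : 0 < γ) (hg1 : γ < 1) (hqm0 : 0 < qmax) (hqm1 : qmax < 1)
    (hdm1 : dmax < 1)
    (q d : Fin n → ℝ)
    (hq0 : ∀ t, 0 < q t)
    (hd0 : ∀ t, 0 < d t)
    (hqle : ∀ t, q t ≤ qmax) (hdle : ∀ t, d t ≤ dmax)
    (hbound : dmax < 1 / (1 + ((1 / γ) - 1) * (qmax / (1 - qmax)))) :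
    (∑ t, q t * d t) / (∑ t, (q t * d t + (1 - q t) * (1 - d t))) < γ := by
  have hmax := one_sub_mul_mul_lt_of_lt_one_div hg0 hg1.le hqm0.le hqm1 hbound
  have hnonempty : (univ : Finset (Fin n)).Nonempty := univ_nonempty_iff.2 ⟨⟨0, hn⟩⟩
  refine sum_div_sum_lt_of_forall_lt_mul hg0 hnonempty
    (fun t _ => (mul_pos (hq0 t) (hd0 t)).le) fun t _ => ?_
  have := one_sub_mul_mul_lt_of_le hg0.le hg1.le (hq0 t).le (hd0 t).le (hqle t) (hdle t)
    hqm1.le hdm1.le hmax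
  linarith

theorem stmt_10 (n : ℕ) (hn : 1 ≤ n) (γ qmax dmax : ℝ)
    (hg0 : 0 < γ) (hg1 : γ < 1) (hqm0 : 0 < qmax) (hqm1 : qmax < 1)
    (hdm0 : 0 < dmax) (hdm1 : dmax < 1)
    (q d : Fin n → ℝ)
    (hq0 : ∀ t, 0 < q t) (hq1 : ∀ t, q t < 1)
    (hd0 : ∀ t, 0 < d t) (hd1 : ∀ t, d t < 1)
    (hqle : ∀ t, q t ≤ qmax) (hdle : ∀ t, d t ≤ dmax)
    (hbound : dmax < 1 / (1 + ((1 / γ) - 1) * (qmax / (1 - qmax)))) :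
    (∑ t, q t * d t) / (∑ t, (q t * d t + (1 - q t) * (1 - d t))) < γ :=
  stmt_10_general n hn γ qmax dmax hg0 hg1 hqm0 hqm1 hdm1 q d hq0 hd0 hqle hdle hbound
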